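/- arXiv:2505.07106 — 4 statements merged into one kernel-verified Lean document; each statement's English description precedes it below -/
import Mathlib

section
/- Let T be an invertible element of a Clifford algebra Cl(Q). If the Clifford conjugate norm involute(reverse(T)) * T lies in the center of Cl(Q), then for every U with reverse(U) = involute(U), the element T U T⁻¹ also satisfies reverse(T U T⁻¹) = involute(T U T⁻¹). -/
open CliffordAlgebra

/-- If `T` is an invertible element of a Clifford algebra with
`involute (reverse T) * T` central, then conjugation by `T` preserves the
subspace of elements `U` with `reverse U = involute U`. -/
theorem conj_preserves_type03 {F V : Type*} [Field F] [AddCommGroup V]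
    [Module F V] (Q : QuadraticForm F V) (T : (CliffordAlgebra Q)ˣ)
    (hT : involute (reverse (Q := Q) (T : CliffordAlgebra Q)) * (T : CliffordAlgebra Q) ∈
      Subalgebra.center F (CliffordAlgebra Q)) :
    ∀ U : CliffordAlgebra Q, reverse (Q := Q) U = involute U →
      reverse (Q := Q) ((T : CliffordAlgebra Q) * U * ((T⁻¹ : (CliffordAlgebra Q)ˣ) : CliffordAlgebra Q)) =
        involute ((T : CliffordAlgebra Q) * U * ((T⁻¹ : (CliffordAlgebra Q)ˣ) : CliffordAlgebra Q)) := by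
  intro U hU
  set t : CliffordAlgebra Q := (T : CliffordAlgebra Q) with ht
  set ti : CliffordAlgebra Q := ((T⁻¹ : (CliffordAlgebra Q)ˣ) : CliffordAlgebra Q) with hti
  have hmul : t * ti = 1 := T.mul_inv
  have hmul' : ti * t = 1 := T.inv_mul
  set N : CliffordAlgebra Q := involute (reverse (Q := Q) t) * t with hN
  set M : CliffordAlgebra Q := reverse (Q := Q) t * involute t with hM
  have hMN : M = involute N := by
    simp [hM, hN, map_mul, involute_involute]
  have hNc : ∀ g : CliffordAlgebra Q, g * N = N * g :=
    fun g => Subalgebra.mem_center_iff.mp hT g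
  have hMc : ∀ g : CliffordAlgebra Q, g * M = M * g := by
    intro g
    have : involute (involute g * N) = involute (N * involute g) := by
      rw [hNc (involute g)]
    simpa [map_mul, involute_involute, hMN] using this
  have h1 : involute t * involute ti = 1 := by
    rw [← map_mul, hmul, map_one]
  have h2 : reverse (Q := Q) ti * reverse (Q := Q) t = 1 := by
    rw [← reverse.map_mul, hmul, reverse.map_one]
  calc reverse (Q := Q) (t * U * ti)
      = reverse (Q := Q) ti * reverse (Q := Q) U * reverse (Q := Q) t := by
        simp [reverse.map_mul, mul_assoc]
    _ = reverse (Q := Q) ti * (reverse (Q := Q) U * reverse (Q := Q) t *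
          (involute t * involute ti)) := by rw [h1, mul_one, mul_assoc]
    _ = reverse (Q := Q) ti * (involute U * M * involute ti) := by
        rw [hU, hM]; simp only [mul_assoc]
    _ = reverse (Q := Q) ti * (M * involute U * involute ti) := by
        rw [hMc (involute U)]
    _ = (reverse (Q := Q) ti * reverse (Q := Q) t) *
          (involute t * (involute U * involute ti)) := by
        rw [hM]; simp only [mul_assoc]
    _ = involute (t * U * ti) := by
        rw [h2, one_mul, map_mul, map_mul, mul_assoc]
end

section
/- Let T be an invertible element of a Clifford algebra Cl(Q) with reverse(T) * T = V where V is a central invertible element. Then for every element U of Cl(Q), reverse(T U T⁻¹) = T · reverse(U) · T⁻¹. -/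
open CliffordAlgebra

/-- If `T` is invertible with `reverse T * T = V` for a central invertible `V`,
then `reverse (T U T⁻¹) = T * reverse U * T⁻¹` for every `U`. -/
theorem reverse_conj_eq {R M : Type*} [CommRing R] [AddCommGroup M] [Module R M]
    (Q : QuadraticForm R M) (T V : (CliffordAlgebra Q)ˣ)
    (hV : (V : CliffordAlgebra Q) ∈ Subalgebra.center R (CliffordAlgebra Q))
    (hTV : reverse (Q := Q) (T : CliffordAlgebra Q) * (T : CliffordAlgebra Q) =
      (V : CliffordAlgebra Q)) :
    ∀ U : CliffordAlgebra Q,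
      reverse (Q := Q) ((T : CliffordAlgebra Q) * U * ((T⁻¹ : (CliffordAlgebra Q)ˣ) : CliffordAlgebra Q)) =
        (T : CliffordAlgebra Q) * reverse (Q := Q) U *
          ((T⁻¹ : (CliffordAlgebra Q)ˣ) : CliffordAlgebra Q) := by
  intro U
  set t : CliffordAlgebra Q := (T : CliffordAlgebra Q) with ht
  set ti : CliffordAlgebra Q := ((T⁻¹ : (CliffordAlgebra Q)ˣ) : CliffordAlgebra Q) with hti
  set v : CliffordAlgebra Q := (V : CliffordAlgebra Q) with hv
  set vi : CliffordAlgebra Q := ((V⁻¹ : (CliffordAlgebra Q)ˣ) : CliffordAlgebra Q) with hvi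
  have hmul : t * ti = 1 := T.mul_inv
  have hmul' : ti * t = 1 := T.inv_mul
  have hvmul : v * vi = 1 := V.mul_inv
  have hvmul' : vi * v = 1 := V.inv_mul
  have hc : ∀ x, x * v = v * x := Subalgebra.mem_center_iff.mp hV
  have hc' : ∀ x : CliffordAlgebra Q, x * vi = vi * x := by
    intro x
    have key : v * (x * vi) = x := by
      rw [← mul_assoc, ← hc, mul_assoc, hvmul, mul_one]
    calc x * vi = vi * v * (x * vi) := by rw [hvmul', one_mul]
      _ = vi * x := by rw [mul_assoc, key]
  have hrt : reverse (Q := Q) t = v * ti := by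
    have h := congrArg (· * ti) hTV
    simpa [mul_assoc, hmul] using h
  have hrti : reverse (Q := Q) ti = t * vi := by
    have h1 : reverse (Q := Q) ti * reverse (Q := Q) t = 1 := by
      rw [← reverse.map_mul, hmul]; simp
    have h2 : reverse (Q := Q) t * (t * vi) = 1 := by
      rw [hrt, mul_assoc, ← mul_assoc ti t, hmul', one_mul, hvmul]
    calc reverse (Q := Q) ti
        = reverse (Q := Q) ti * (reverse (Q := Q) t * (t * vi)) := by rw [h2, mul_one]
      _ = (reverse (Q := Q) ti * reverse (Q := Q) t) * (t * vi) := by rw [mul_assoc]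
      _ = t * vi := by rw [h1, one_mul]
  calc reverse (Q := Q) (t * U * ti)
      = reverse (Q := Q) ti * (reverse (Q := Q) U * reverse (Q := Q) t) := by
        rw [reverse.map_mul, reverse.map_mul]
    _ = t * vi * (reverse (Q := Q) U * (v * ti)) := by rw [hrt, hrti]
    _ = t * (vi * (reverse (Q := Q) U * (v * ti))) := by rw [mul_assoc]
    _ = t * (reverse (Q := Q) U * vi * (v * ti)) := by rw [← mul_assoc vi, ← hc']
    _ = t * (reverse (Q := Q) U * (vi * v * ti)) := by
        rw [mul_assoc (reverse (Q := Q) U), ← mul_assoc vi]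
    _ = t * reverse (Q := Q) U * ti := by rw [hvmul', one_mul, ← mul_assoc]
end

section
/- The set B := { T ∈ Cl(Q)ˣ : involute(reverse(T)) * T lies in the center of Cl(Q) } is a subgroup of the group of units of Cl(Q). -/
open CliffordAlgebra

section aux

variable {R M : Type*} [CommRing R] [AddCommGroup M] [Module R M]
variable (Q : QuadraticForm R M)

private noncomputable def sigmaCl (x : CliffordAlgebra Q) : CliffordAlgebra Q :=
  involute (reverse (Q := Q) x)

private lemma sigmaCl_mul (a b : CliffordAlgebra Q) :
    sigmaCl Q (a * b) = sigmaCl Q b * sigmaCl Q a := by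
  simp [sigmaCl, reverse.map_mul, map_mul]

private lemma sigmaCl_one : sigmaCl Q (1 : CliffordAlgebra Q) = 1 := by
  simp [sigmaCl]

private noncomputable def groupB : Subgroup (CliffordAlgebra Q)ˣ where
  carrier := {T : (CliffordAlgebra Q)ˣ |
      sigmaCl Q (T : CliffordAlgebra Q) * (T : CliffordAlgebra Q) ∈
        Subalgebra.center R (CliffordAlgebra Q)}
  one_mem' := by
    simp only [Set.mem_setOf_eq, Units.val_one, sigmaCl_one, one_mul]
    exact Subalgebra.one_mem _
  mul_mem' := by
    intro S T hS hT
    simp only [Set.mem_setOf_eq, Units.val_mul, sigmaCl_mul] at *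
    have hS' := hS
    rw [Subalgebra.mem_center_iff] at hS'
    have : sigmaCl Q (T : CliffordAlgebra Q) * sigmaCl Q (S : CliffordAlgebra Q) *
        ((S : CliffordAlgebra Q) * (T : CliffordAlgebra Q)) =
        (sigmaCl Q (T : CliffordAlgebra Q) * (T : CliffordAlgebra Q)) *
        (sigmaCl Q (S : CliffordAlgebra Q) * (S : CliffordAlgebra Q)) := by
      rw [mul_assoc, ← mul_assoc (sigmaCl Q (S : CliffordAlgebra Q)),
        ← hS' (T : CliffordAlgebra Q), ← mul_assoc]
    rw [this]
    exact Subalgebra.mul_mem _ hT hS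
  inv_mem' := by
    intro T hT
    simp only [Set.mem_setOf_eq] at *
    set t : CliffordAlgebra Q := (T : CliffordAlgebra Q) with ht
    set u : CliffordAlgebra Q := ((T⁻¹ : (CliffordAlgebra Q)ˣ) : CliffordAlgebra Q) with hu
    set z : CliffordAlgebra Q := sigmaCl Q t * t with hz
    have htu : t * u = 1 := by rw [ht, hu, ← Units.val_mul, mul_inv_cancel, Units.val_one]
    have hut : u * t = 1 := by rw [ht, hu, ← Units.val_mul, inv_mul_cancel, Units.val_one]
    rw [Subalgebra.mem_center_iff] at hT ⊢
    have hst : sigmaCl Q t = z * u := by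
      rw [hz, mul_assoc, htu, mul_one]
    have htst : t * sigmaCl Q t = z := by
      rw [hst, ← mul_assoc, hT t, mul_assoc, htu, mul_one]
    have h1 : sigmaCl Q u * u * z = 1 := by
      rw [← htst, ← mul_assoc, mul_assoc (sigmaCl Q u), hut, mul_one, ← sigmaCl_mul, htu,
        sigmaCl_one]
    have h2 : z * (sigmaCl Q u * u) = 1 := by
      rw [← hT, h1]
    intro b
    calc b * (sigmaCl Q u * u)
        = (sigmaCl Q u * u * z) * (b * (sigmaCl Q u * u)) := by rw [h1, one_mul]
      _ = (sigmaCl Q u * u) * ((z * b) * (sigmaCl Q u * u)) := by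
          rw [mul_assoc (sigmaCl Q u * u) z, ← mul_assoc z b]
      _ = (sigmaCl Q u * u) * ((b * z) * (sigmaCl Q u * u)) := by rw [← hT b]
      _ = (sigmaCl Q u * u) * (b * (z * (sigmaCl Q u * u))) := by rw [mul_assoc b z]
      _ = (sigmaCl Q u * u) * b := by rw [h2, mul_one]

end aux

/-- The set `B = { T ∈ Cl(Q)ˣ : involute (reverse T) * T is central }` is a
subgroup of the group of units of the Clifford algebra. -/
theorem groupB_isSubgroup {R M : Type*} [CommRing R] [AddCommGroup M] [Module R M]
    (Q : QuadraticForm R M) :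
    ∃ G : Subgroup (CliffordAlgebra Q)ˣ,
      ∀ T : (CliffordAlgebra Q)ˣ,
        T ∈ G ↔ involute (reverse (Q := Q) (T : CliffordAlgebra Q)) * (T : CliffordAlgebra Q) ∈
          Subalgebra.center R (CliffordAlgebra Q) := by
  exact ⟨groupB Q, fun T => Iff.rfl⟩
end

section
/- Let A be an associative unital algebra over a field, α a nonzero scalar, X a central nilpotent element, and W an element with W² = 0 that commutes with X. Set Y = 1 + (1/2)(α + X)⁻¹ W (where α + X is invertible since X is nilpotent and α ≠ 0). Then Y⁻¹ · (α·1 + X + W) · Y⁻¹ = α·1 + X. -/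
/-- Let `X` be a central nilpotent element of an associative unital algebra over
a field of characteristic ≠ 2, `W` an element with `W² = 0` commuting with `X`,
and `α` a nonzero scalar (so `α·1 + X` is invertible).  With
`Y = 1 + (1/2)(α+X)⁻¹ W` and `Y⁻¹ = 1 − (1/2)(α+X)⁻¹ W`, one has
`Y⁻¹ (α·1 + X + W) Y⁻¹ = α·1 + X`. -/
theorem conj_kills_W_central {F A : Type*} [Field F] [Ring A] [Algebra F A]
    (h2 : (2 : F) ≠ 0) (X W : A)
    (hX : ∀ a : A, X * a = a * X) (hXnil : IsNilpotent X)
    (hW : W ^ 2 = 0) (hXW : X * W = W * X)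
    (α : F) (hα : α ≠ 0) :
    (1 + (2 : F)⁻¹ • (Ring.inverse (algebraMap F A α + X) * W)) *
        (1 - (2 : F)⁻¹ • (Ring.inverse (algebraMap F A α + X) * W)) = 1 ∧
    (1 - (2 : F)⁻¹ • (Ring.inverse (algebraMap F A α + X) * W)) *
        (1 + (2 : F)⁻¹ • (Ring.inverse (algebraMap F A α + X) * W)) = 1 ∧
    (1 - (2 : F)⁻¹ • (Ring.inverse (algebraMap F A α + X) * W)) *
        (algebraMap F A α + X + W) *
        (1 - (2 : F)⁻¹ • (Ring.inverse (algebraMap F A α + X) * W)) =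
      algebraMap F A α + X := by
  set v : A := algebraMap F A α + X with hv
  have hvu : IsUnit v := by
    refine hXnil.isUnit_add_left_of_commute ?_ (hX _)
    exact (isUnit_iff_ne_zero.mpr hα).map (algebraMap F A)
  set u : A := Ring.inverse v with hu
  have huv : u * v = 1 := Ring.inverse_mul_cancel v hvu
  have hvu1 : v * u = 1 := Ring.mul_inverse_cancel v hvu
  have hvW : v * W = W * v := by
    simp only [hv, add_mul, mul_add, hXW]
    rw [Algebra.commutes]
  have huW : u * W = W * u := by
    calc u * W = u * W * (v * u) := by rw [hvu1, mul_one]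
    _ = u * (W * v) * u := by noncomm_ring
    _ = u * (v * W) * u := by rw [hvW]
    _ = (u * v) * (W * u) := by noncomm_ring
    _ = W * u := by rw [huv, one_mul]
  have hWW : W * W = 0 := by rw [← sq]; exact hW
  have hZ2 : (u * W) * (u * W) = 0 := by
    calc (u * W) * (u * W) = u * (W * u) * W := by noncomm_ring
    _ = u * (u * W) * W := by rw [huW]
    _ = u * u * (W * W) := by noncomm_ring
    _ = 0 := by rw [hWW, mul_zero]
  set Z : A := (2 : F)⁻¹ • (u * W) with hZdef
  have hZsq : Z * Z = 0 := by
    rw [hZdef, smul_mul_smul_comm, hZ2, smul_zero]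
  have hvZ : v * Z = (2 : F)⁻¹ • W := by
    rw [hZdef, mul_smul_comm, ← mul_assoc, hvu1, one_mul]
  have hZv : Z * v = (2 : F)⁻¹ • W := by
    rw [hZdef, smul_mul_assoc, mul_assoc, ← hvW, ← mul_assoc, huv, one_mul]
  have hWZ : W * Z = 0 := by
    rw [hZdef, mul_smul_comm, ← mul_assoc, ← huW, mul_assoc, hWW, mul_zero, smul_zero]
  have hZW : Z * W = 0 := by
    rw [hZdef, smul_mul_assoc, mul_assoc, hWW, mul_zero, smul_zero]
  have hhalf : (2 : F)⁻¹ • W + (2 : F)⁻¹ • W = W := by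
    rw [← add_smul]
    have : (2 : F)⁻¹ + 2⁻¹ = 1 := by rw [← two_mul, mul_inv_cancel₀ h2]
    rw [this, one_smul]
  have hhalf2 : W - (2 : F)⁻¹ • W = (2 : F)⁻¹ • W := sub_eq_iff_eq_add.mpr hhalf.symm
  refine ⟨?_, ?_, ?_⟩
  · show (1 + Z) * (1 - Z) = 1
    rw [add_mul, one_mul, mul_sub, mul_one, hZsq, sub_zero]
    abel
  · show (1 - Z) * (1 + Z) = 1
    rw [sub_mul, one_mul, mul_add, mul_one, hZsq, add_zero]
    abel
  · show (1 - Z) * (v + W) * (1 - Z) = v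
    have h1 : (1 - Z) * (v + W) = v + (2 : F)⁻¹ • W := by
      rw [sub_mul, one_mul, mul_add, hZv, hZW, add_zero, add_sub_assoc, hhalf2]
    rw [h1, mul_sub, mul_one, add_mul, hvZ, smul_mul_assoc, hWZ, smul_zero, add_zero,
      add_sub_cancel_right]
end
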